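/- arXiv:2005.06009 — 2 statements merged into one kernel-verified Lean document; each statement's English description precedes it below -/
import Mathlib

section
/- Suppose −(A−M) is Hurwitz, and suppose that the trajectory x(t) = ∫₀ᵗ exp(−(t−s)(A−M)) 𝟙 ds (the solution of ẋ = −(A−M)x + d with x(0)=0 and constant disturbance d ≡ 𝟙) satisfies |x_i(t)| ≤ γ for all i and all t ≥ 0. Then the vector v = (A−M)^{−1}𝟙 satisfies (A−M)v = 𝟙, v > 0, and v ≤ γ𝟙. -/
/-!
Write `B = A - M`. Off the diagonal `-B = M - A` is nonnegative, so `exp (s • -B)` is entrywise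
nonnegative for `s ≥ 0` (shift `-B` by a multiple of `1` to make it nonnegative), hence so is the
impulse response `g s = exp (s • -B) *ᵥ 𝟙`, and `x t = ∫₀ᵗ g`. The bound `|xᵢ| ≤ γ` then makes `g`
integrable on `(0, ∞)`. Its derivative `-B *ᵥ g` is integrable too, so `g → 0`, and letting
`t → ∞` in `B *ᵥ x t = 𝟙 - g t` gives `B *ᵥ L = 𝟙` for `L = ∫₀^∞ g`, where `0 ≤ L ≤ γ`.
As `-B` is Hurwitz, `0` is not an eigenvalue, so `L = B⁻¹ *ᵥ 𝟙`; finally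
`Aᵢᵢ Lᵢ = 1 + (M *ᵥ L)ᵢ ≥ 1` forces `Lᵢ > 0`.
-/

open Matrix MeasureTheory

/-- A real square matrix is Hurwitz if every eigenvalue (over `ℂ`) has negative real part. -/
def IsHurwitz {n : Type*} [Fintype n] [DecidableEq n] (B : Matrix n n ℝ) : Prop :=
  ∀ μ ∈ spectrum ℂ (B.map Complex.ofReal), μ.re < 0

open NormedSpace Filter Topology Set

theorem integrableOn_Ioi_of_nonneg_of_intervalIntegral_le {f : ℝ → ℝ} {a C : ℝ}
    (hf : Continuous f) (hf₀ : ∀ s ≥ a, 0 ≤ f s) (hC : ∀ t ≥ a, ∫ s in a..t, f s ≤ C) :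
    IntegrableOn f (Ioi a) := by
  refine integrableOn_Ioi_of_intervalIntegral_norm_bounded C a
    (fun t => hf.integrableOn_Icc.mono_set Ioc_subset_Icc_self) tendsto_id ?_
  filter_upwards [eventually_ge_atTop a] with t ht
  calc ∫ s in a..t, ‖f s‖ = ∫ s in a..t, f s :=
        intervalIntegral.integral_congr fun s hs =>
          Real.norm_of_nonneg (hf₀ s (uIcc_of_le ht ▸ hs).1)
    _ ≤ C := hC t ht

theorem eval_intervalIntegral {ι : Type*} [Fintype ι] {E : ι → Type*}
    [∀ i, NormedAddCommGroup (E i)] [∀ i, NormedSpace ℝ (E i)]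
    [∀ i, CompleteSpace (E i)] {f : ℝ → ∀ i, E i} {a b : ℝ}
    (hf : IntervalIntegrable f volume a b) (i : ι) :
    (∫ s in a..b, f s) i = ∫ s in a..b, f s i :=
  ((ContinuousLinearMap.proj (R := ℝ) (φ := E) i).intervalIntegral_comp_comm hf).symm

namespace Matrix

variable {n : Type*} [Fintype n] [DecidableEq n]

theorem exp_apply_nonneg {Y : Matrix n n ℝ} (hY : ∀ i j, 0 ≤ Y i j) (i j : n) :
    0 ≤ exp Y i j := by
  let _ := Matrix.linftyOpNormedRing (n := n) (α := ℝ)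
  let _ := Matrix.linftyOpNormedAlgebra (n := n) (R := ℝ) (α := ℝ)
  have hsum : HasSum (fun k : ℕ => ((k.factorial⁻¹ : ℝ) • Y ^ k) i j) (exp Y i j) :=
    Pi.hasSum.1 (Pi.hasSum.1 (exp_series_hasSum_exp' Y) i) j
  exact hsum.nonneg fun k => mul_nonneg (by positivity) (pow_apply_nonneg hY k i j)

theorem exp_apply_nonneg_of_offDiag_nonneg {X : Matrix n n ℝ}
    (hX : ∀ i j, i ≠ j → 0 ≤ X i j) (i j : n) : 0 ≤ exp X i j := by
  set c := ∑ k, |X k k|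
  have hshift : ∀ i j, 0 ≤ (X + c • 1) i j := by
    intro i j
    rcases eq_or_ne i j with rfl | hij
    · have : |X i i| ≤ c := Finset.single_le_sum (fun k _ => abs_nonneg (X k k)) (Finset.mem_univ i)
      simp only [add_apply, smul_apply, one_apply_eq, smul_eq_mul, mul_one]
      linarith [neg_abs_le (X i i)]
    · simpa [one_apply_ne hij] using hX i j hij
  have hexp : exp X = Real.exp (-c) • exp (X + c • 1) := by
    calc exp X = exp ((-c) • 1 + (X + c • 1)) := by congr 1; module
      _ = exp ((-c) • (1 : Matrix n n ℝ)) * exp (X + c • 1) :=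
        exp_add_of_commute _ _ ((Commute.one_left _).smul_left _)
      _ = Real.exp (-c) • exp (X + c • 1) := by
        rw [smul_one_eq_diagonal, exp_diagonal, Pi.exp_def, ← Real.exp_eq_exp_ℝ,
          ← smul_one_eq_diagonal, smul_mul_assoc, one_mul]
  rw [hexp, smul_apply, smul_eq_mul]
  exact mul_nonneg (Real.exp_pos _).le (exp_apply_nonneg hshift i j)

theorem exp_smul_mulVec_nonneg {X : Matrix n n ℝ} (hX : ∀ i j, i ≠ j → 0 ≤ X i j)
    {w : n → ℝ} (hw : ∀ i, 0 ≤ w i) {s : ℝ} (hs : 0 ≤ s) (i : n) : 0 ≤ (exp (s • X) *ᵥ w) i :=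
  Finset.sum_nonneg fun j _ => mul_nonneg
    (exp_apply_nonneg_of_offDiag_nonneg (fun k l hkl => mul_nonneg hs (hX k l hkl)) i j) (hw j)

theorem hasDerivAt_exp_smul_mulVec (X : Matrix n n ℝ) (w : n → ℝ) (t : ℝ) :
    HasDerivAt (fun s : ℝ => exp (s • X) *ᵥ w) (X *ᵥ (exp (t • X) *ᵥ w)) t := by
  let _ := Matrix.linftyOpNormedRing (n := n) (α := ℝ)
  let _ := Matrix.linftyOpNormedAlgebra (n := n) (R := ℝ) (α := ℝ)
  rw [mulVec_mulVec]
  exact ((mulVecBilin ℝ ℝ).flip w).toContinuousLinearMap.hasFDerivAt.comp_hasDerivAt t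
    (hasDerivAt_exp_smul_const' X t)

theorem continuous_exp_smul_mulVec (X : Matrix n n ℝ) (w : n → ℝ) :
    Continuous fun s : ℝ => exp (s • X) *ᵥ w :=
  continuous_iff_continuousAt.2 fun t => (hasDerivAt_exp_smul_mulVec X w t).continuousAt

theorem mulVec_intervalIntegral_exp_smul_mulVec (X : Matrix n n ℝ) (w : n → ℝ) (t : ℝ) :
    X *ᵥ ∫ s in (0 : ℝ)..t, exp (s • X) *ᵥ w = exp (t • X) *ᵥ w - w := by
  calc X *ᵥ ∫ s in (0 : ℝ)..t, exp (s • X) *ᵥ w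
      = ∫ s in (0 : ℝ)..t, X *ᵥ (exp (s • X) *ᵥ w) :=
        ((mulVecLin X).toContinuousLinearMap.intervalIntegral_comp_comm
          ((continuous_exp_smul_mulVec X w).intervalIntegrable 0 t)).symm
    _ = exp (t • X) *ᵥ w - w := by
      rw [intervalIntegral.integral_eq_sub_of_hasDerivAt
        (fun s _ => hasDerivAt_exp_smul_mulVec X w s)
        ((continuous_const.matrix_mulVec (continuous_exp_smul_mulVec X w)).intervalIntegrable 0 t)]
      simp

theorem mulVec_integral_Ioi_exp_smul_mulVec (X : Matrix n n ℝ) (w : n → ℝ)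
    (hint : IntegrableOn (fun s : ℝ => exp (s • X) *ᵥ w) (Ioi 0)) :
    X *ᵥ ∫ s in Ioi (0 : ℝ), exp (s • X) *ᵥ w = -w := by
  let φ := (mulVecLin X).toContinuousLinearMap
  have hdecay : Tendsto (fun s : ℝ => exp (s • X) *ᵥ w) atTop (𝓝 0) :=
    tendsto_zero_of_hasDerivAt_of_integrableOn_Ioi
      (fun s _ => hasDerivAt_exp_smul_mulVec X w s) (φ.integrable_comp hint) hint
  have hlim : Tendsto (fun t => X *ᵥ ∫ s in (0 : ℝ)..t, exp (s • X) *ᵥ w) atTop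
      (𝓝 (X *ᵥ ∫ s in Ioi (0 : ℝ), exp (s • X) *ᵥ w)) :=
    (φ.continuous.tendsto _).comp (intervalIntegral_tendsto_integral_Ioi 0 hint tendsto_id)
  simp_rw [mulVec_intervalIntegral_exp_smul_mulVec] at hlim
  simpa using tendsto_nhds_unique hlim (hdecay.sub_const w)

theorem exists_nonneg_mulVec_eq_neg_of_intervalIntegral_le {X : Matrix n n ℝ}
    (hX : ∀ i j, i ≠ j → 0 ≤ X i j) {w : n → ℝ} (hw : ∀ i, 0 ≤ w i) {γ : ℝ}
    (hγ : ∀ i, ∀ t ≥ 0, (∫ s in (0 : ℝ)..t, exp (s • X) *ᵥ w) i ≤ γ) :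
    ∃ L : n → ℝ, X *ᵥ L = -w ∧ ∀ i, 0 ≤ L i ∧ L i ≤ γ := by
  set g := fun s : ℝ => exp (s • X) *ᵥ w
  have hg : Continuous g := continuous_exp_smul_mulVec X w
  have hg₀ : ∀ s ≥ 0, ∀ i, 0 ≤ g s i := fun s hs => exp_smul_mulVec_nonneg hX hw hs
  have hγ' : ∀ i, ∀ t ≥ 0, ∫ s in (0 : ℝ)..t, g s i ≤ γ := fun i t ht =>
    eval_intervalIntegral (hg.intervalIntegrable 0 t) i ▸ hγ i t ht
  have hgi : ∀ i, IntegrableOn (g · i) (Ioi 0) := fun i =>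
    integrableOn_Ioi_of_nonneg_of_intervalIntegral_le (continuous_apply i |>.comp hg)
      (fun s hs => hg₀ s hs i) (hγ' i)
  refine ⟨∫ s in Ioi 0, g s, mulVec_integral_Ioi_exp_smul_mulVec X w (Integrable.of_eval hgi),
    fun i => ?_⟩
  rw [eval_integral hgi]
  refine ⟨setIntegral_nonneg measurableSet_Ioi fun s hs => hg₀ s (le_of_lt hs) i, ?_⟩
  refine le_of_tendsto (intervalIntegral_tendsto_integral_Ioi 0 (hgi i) tendsto_id) ?_
  filter_upwards [eventually_ge_atTop 0] with t ht
  exact hγ' i t ht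

end Matrix

theorem IsHurwitz.isUnit_det {n : Type*} [Fintype n] [DecidableEq n] {B : Matrix n n ℝ}
    (hB : IsHurwitz B) : IsUnit B.det := by
  have hunit : IsUnit (B.map Complex.ofReal) := by
    by_contra h
    simpa using hB 0 ((spectrum.zero_mem_iff ℂ).2 h)
  have hdet : (B.map Complex.ofReal).det = (B.det : ℂ) :=
    (RingHom.map_det Complex.ofRealHom B).symm
  rw [isUnit_iff_isUnit_det, hdet, isUnit_iff_ne_zero, Complex.ofReal_ne_zero] at hunit
  exact hunit.isUnit

theorem Matrix.IsDiag.pos_of_sub_mulVec_eq_one {n : Type*} [Fintype n] [DecidableEq n]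
    {A M : Matrix n n ℝ} (hA : A.IsDiag) (hM : ∀ i j, 0 ≤ M i j) {v : n → ℝ}
    (hv : ∀ i, 0 ≤ v i) (h : (A - M) *ᵥ v = fun _ => 1) (i : n) : 0 < v i := by
  have hMv : 0 ≤ (M *ᵥ v) i := Finset.sum_nonneg fun j _ => mul_nonneg (hM i j) (hv j)
  have hAv : A i i * v i = 1 + (M *ᵥ v) i := by
    have := congrFun h i
    rw [sub_mulVec, ← hA.diagonal_diag, Pi.sub_apply, mulVec_diagonal, diag_apply] at this
    linarith
  refine (hv i).lt_of_ne fun h0 => ?_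
  rw [← h0, mul_zero] at hAv
  linarith

theorem stmt_1_general {N : ℕ} (A M : Matrix (Fin N) (Fin N) ℝ)
    (hAdiag : ∀ i j, i ≠ j → A i j = 0)
    (hMnonneg : ∀ i j, 0 ≤ M i j)
    (hHur : IsHurwitz (-(A - M)))
    (γ : ℝ)
    (x : ℝ → Fin N → ℝ)
    (hx : ∀ t : ℝ,
      x t = ∫ s in (0 : ℝ)..t,
        (NormedSpace.exp (-((t - s) • (A - M)))) *ᵥ (fun _ : Fin N => (1 : ℝ)))
    (hxbound : ∀ i : Fin N, ∀ t ≥ (0 : ℝ), |x t i| ≤ γ) :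
    ((A - M) *ᵥ ((A - M)⁻¹ *ᵥ (fun _ : Fin N => (1 : ℝ))) = fun _ : Fin N => (1 : ℝ)) ∧
    (∀ i, 0 < ((A - M)⁻¹ *ᵥ (fun _ : Fin N => (1 : ℝ))) i) ∧
    (∀ i, ((A - M)⁻¹ *ᵥ (fun _ : Fin N => (1 : ℝ))) i ≤ γ) := by
  have hxg : ∀ t, x t = ∫ s in (0 : ℝ)..t, exp (s • -(A - M)) *ᵥ fun _ => 1 := by
    intro t
    simp_rw [hx t, ← smul_neg]
    simpa using intervalIntegral.integral_comp_sub_left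
      (fun s => exp (s • -(A - M)) *ᵥ fun _ => 1) t (a := 0) (b := t)
  have hMetzler : ∀ k l, k ≠ l → 0 ≤ (-(A - M)) k l := fun k l hkl => by
    simpa [hAdiag k l hkl] using hMnonneg k l
  obtain ⟨L, hL, hL_bounds⟩ := exists_nonneg_mulVec_eq_neg_of_intervalIntegral_le hMetzler
    (fun _ => zero_le_one) fun i t ht => hxg t ▸ (abs_le.1 (hxbound i t ht)).2
  rw [neg_mulVec, neg_inj] at hL
  have hv : (A - M)⁻¹ *ᵥ (fun _ => 1) = L := by
    have hdet : IsUnit (A - M).det := isUnit_of_mul_isUnit_right (det_neg (A - M) ▸ hHur.isUnit_det)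
    rw [← hL, mulVec_mulVec, nonsing_inv_mul _ hdet, one_mulVec]
  rw [hv]
  exact ⟨hL, IsDiag.pos_of_sub_mulVec_eq_one hAdiag hMnonneg (fun i => (hL_bounds i).1) hL,
    fun i => (hL_bounds i).2⟩

/-- If `-(A-M)` is Hurwitz and the zero-initial-condition trajectory for the
constant disturbance `d ≡ 𝟙` satisfies `|xᵢ(t)| ≤ γ` for all `i, t ≥ 0`, then
`v = (A-M)⁻¹ 𝟙` satisfies `(A-M) v = 𝟙`, `v > 0` and `v ≤ γ 𝟙`. -/
theorem stmt_1 {N : ℕ} (A M : Matrix (Fin N) (Fin N) ℝ)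
    (hAdiag : ∀ i j, i ≠ j → A i j = 0) (hApos : ∀ i, 0 < A i i)
    (hMnonneg : ∀ i j, 0 ≤ M i j) (hMdiag : ∀ i, M i i = 0)
    (hHur : IsHurwitz (-(A - M)))
    (γ : ℝ)
    (x : ℝ → Fin N → ℝ)
    (hx : ∀ t : ℝ,
      x t = ∫ s in (0 : ℝ)..t,
        (NormedSpace.exp (-((t - s) • (A - M)))) *ᵥ (fun _ : Fin N => (1 : ℝ)))
    (hxbound : ∀ i : Fin N, ∀ t ≥ (0 : ℝ), |x t i| ≤ γ) :
    ((A - M) *ᵥ ((A - M)⁻¹ *ᵥ (fun _ : Fin N => (1 : ℝ))) = fun _ : Fin N => (1 : ℝ)) ∧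
    (∀ i, 0 < ((A - M)⁻¹ *ᵥ (fun _ : Fin N => (1 : ℝ))) i) ∧
    (∀ i, ((A - M)⁻¹ *ᵥ (fun _ : Fin N => (1 : ℝ))) i ≤ γ) :=
  stmt_1_general A M hAdiag hMnonneg hHur γ x hx hxbound
end

section
/- Suppose −(A−M) is Hurwitz and the vector u = (A−M)^{−1}𝟙 satisfies u ≤ γ𝟙 for some γ > 0. Let k ≥ 1 and let c : {0,1,…,k} → {1,…,N} be a cycle in the graph of MA^{−1}, i.e., c(0) = c(k) and M_{c(l+1),c(l)} > 0 for all 0 ≤ l ≤ k−1, and let w = ∏_{l=0}^{k−1} M_{c(l+1),c(l)} / a_{c(l)} be its weight. Then w < 1 and for every index p in the image of c, 1/(1 − w) ≤ a_p · γ. -/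
/-!
`B = A - M` is a Z-matrix whose eigenvalues have positive real part. For small `h > 0` the matrix
`Q = 1 - h B` is entrywise nonnegative with spectral radius `< 1`, so by Gelfand's formula
`Q ^ m → 0` and `B⁻¹ = h ∑ Q ^ m` is entrywise nonnegative; in particular `u = B⁻¹ 𝟙 ≥ 0`.

Reading `a_i u_i = 1 + ∑_j M_ij u_j` along an edge `j → i` gives `1 + (M_ij / a_j) x_j ≤ x_i`
for `x = A u ≥ 0`. Going once around the cycle from `c l₀` back to itself yields
`1 + w x_p ≤ x_p`, hence `w < 1` and `1 / (1 - w) ≤ x_p = a_p u_p ≤ a_p γ`.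
-/

open Matrix

open Filter Topology Finset

theorem isHurwitz_neg_iff {n : Type*} [Fintype n] [DecidableEq n] {B : Matrix n n ℝ} :
    IsHurwitz (-B) ↔ ∀ μ ∈ spectrum ℂ (B.map Complex.ofReal), 0 < μ.re := by
  rw [IsHurwitz, Matrix.map_neg _ Complex.ofReal_neg, ← spectrum.neg_eq, neg_surjective.forall]
  simp

namespace spectrum

theorem exists_eq_one_sub_mul_of_mem_one_sub_smul {𝕜 A : Type*} [Field 𝕜] [Ring A]
    [Algebra 𝕜 A] {a : A} {h : 𝕜} (hh : h ≠ 0) {z : 𝕜} (hz : z ∈ spectrum 𝕜 (1 - h • a)) :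
    ∃ μ ∈ spectrum 𝕜 a, z = 1 - h * μ := by
  refine ⟨(1 - z) / h, ?_, by field_simp; ring⟩
  rw [spectrum.mem_iff] at hz ⊢
  contrapose! hz
  have : algebraMap 𝕜 A z - (1 - h • a) = (-h) • (algebraMap 𝕜 A ((1 - z) / h) - a) := by
    simp only [Algebra.algebraMap_eq_smul_one, smul_sub, smul_smul]
    field_simp
    module
  rw [this]
  exact hz.smul (Units.mk0 (-h) (neg_ne_zero.mpr hh))

variable {A : Type*} [NormedRing A] [NormedAlgebra ℂ A] [CompleteSpace A]

theorem tendsto_pow_atTop_nhds_zero_of_spectralRadius_lt_one {a : A}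
    (ha : spectralRadius ℂ a < 1) : Tendsto (a ^ ·) atTop (𝓝 0) := by
  obtain ⟨r, hρr, hr1⟩ := ENNReal.lt_iff_exists_nnreal_btwn.mp ha
  have hbound : ∀ᶠ m : ℕ in atTop, ‖a ^ m‖ ≤ (r : ℝ) ^ m := by
    filter_upwards [(pow_nnnorm_pow_one_div_tendsto_nhds_spectralRadius a).eventually_lt_const
      hρr, eventually_ge_atTop 1] with m hm hm1
    have hm0 : (m : ℝ) ≠ 0 := by positivity
    have := ENNReal.rpow_lt_rpow hm (by positivity : (0 : ℝ) < m)
    rw [← ENNReal.rpow_mul, one_div, inv_mul_cancel₀ hm0, ENNReal.rpow_one,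
      ENNReal.rpow_natCast] at this
    exact_mod_cast this.le
  exact squeeze_zero_norm' hbound
    (tendsto_pow_atTop_nhds_zero_of_lt_one r.coe_nonneg (by exact_mod_cast hr1))

theorem eventually_spectralRadius_one_sub_smul_lt_one [Nontrivial A] {a : A}
    (ha : ∀ μ ∈ spectrum ℂ a, 0 < μ.re) :
    ∀ᶠ h : ℝ in 𝓝[>] 0, spectralRadius ℂ (1 - (h : ℂ) • a) < 1 := by
  have hne0 : ∀ μ ∈ spectrum ℂ a, μ ≠ 0 := fun μ hμ h0 => by simpa [h0] using ha μ hμ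
  obtain ⟨μ₀, hμ₀, hmin⟩ := (spectrum.isCompact a).exists_isMinOn (spectrum.nonempty a)
    (f := fun μ : ℂ => 2 * μ.re / ‖μ‖ ^ 2) <| ContinuousOn.div (by fun_prop) (by fun_prop)
      fun μ hμ => pow_ne_zero 2 (norm_ne_zero_iff.mpr (hne0 μ hμ))
  have hε : 0 < 2 * μ₀.re / ‖μ₀‖ ^ 2 := by
    have := ha μ₀ hμ₀
    have := hne0 μ₀ hμ₀
    positivity
  filter_upwards [Ioo_mem_nhdsGT hε] with h ⟨hh0, hh⟩
  suffices ∀ z ∈ spectrum ℂ (1 - (h : ℂ) • a), ‖z‖₊ < 1 by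
    simpa using spectrum.spectralRadius_lt_of_forall_lt _ this
  intro z hz
  obtain ⟨μ, hμ, rfl⟩ := exists_eq_one_sub_mul_of_mem_one_sub_smul (by exact_mod_cast hh0.ne') hz
  have hμ2 : 0 < ‖μ‖ ^ 2 := by have := hne0 μ hμ; positivity
  -- `|1 - hμ|² = 1 - 2h Re μ + h²|μ|²`, and `h < 2 Re μ / |μ|²` by the choice of `μ₀`
  have key : h * ‖μ‖ ^ 2 < 2 * μ.re := (lt_div_iff₀ hμ2).mp (hh.trans_le (hmin hμ))
  have hsq : ‖1 - (h : ℂ) * μ‖ ^ 2 < 1 := by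
    rw [Complex.sq_norm, Complex.normSq_apply] at key ⊢
    simp only [Complex.sub_re, Complex.one_re, Complex.mul_re, Complex.ofReal_re,
      Complex.ofReal_im, Complex.sub_im, Complex.one_im, Complex.mul_im]
    nlinarith
  rw [← NNReal.coe_lt_coe, coe_nnnorm, NNReal.coe_one]
  exact (sq_lt_one_iff₀ (norm_nonneg _)).mp hsq

end spectrum

namespace Matrix

variable {n : Type*} [Fintype n]

theorem one_add_mul_le_of_sub_mulVec_eq_one {A M : Matrix n n ℝ}
    (hAdiag : ∀ i j, i ≠ j → A i j = 0) (hM : ∀ i j, 0 ≤ M i j) {u : n → ℝ} (hu : ∀ i, 0 ≤ u i)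
    (hAMu : (A - M) *ᵥ u = 1) (i j : n) : 1 + M i j * u j ≤ A i i * u i := by
  have hAu : (A *ᵥ u) i = A i i * u i :=
    sum_eq_single i (fun j _ hji => by simp [hAdiag i j hji.symm]) (by simp)
  have hMu : M i j * u j ≤ (M *ᵥ u) i :=
    single_le_sum (f := fun j => M i j * u j) (fun j _ => mul_nonneg (hM i j) (hu j))
      (mem_univ j)
  have := congrFun hAMu i
  rw [sub_mulVec, Pi.sub_apply, hAu, Pi.one_apply] at this
  linarith

variable [DecidableEq n]

attribute [local instance] Matrix.linftyOpNormedRing Matrix.linftyOpNormedAlgebra in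
theorem tendsto_pow_atTop_nhds_zero_of_spectralRadius_lt_one {Q : Matrix n n ℝ}
    (hQ : spectralRadius ℂ (Q.map Complex.ofReal) < 1) : Tendsto (Q ^ ·) atTop (𝓝 0) := by
  have hpow (m : ℕ) : Q.map Complex.ofReal ^ m = (Q ^ m).map Complex.ofReal :=
    (map_pow Complex.ofRealHom.mapMatrix Q m).symm
  have := ((continuous_id.matrix_map Complex.continuous_re).tendsto 0).comp
    (spectrum.tendsto_pow_atTop_nhds_zero_of_spectralRadius_lt_one hQ)
  simpa [Function.comp_def, hpow, Matrix.map_map] using this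

theorem isUnit_det_one_sub_and_inv_nonneg_of_tendsto_pow {Q : Matrix n n ℝ}
    (hQ : ∀ i j, 0 ≤ Q i j) (hlim : Tendsto (Q ^ ·) atTop (𝓝 0)) :
    IsUnit (1 - Q).det ∧ ∀ i j, 0 ≤ (1 - Q)⁻¹ i j := by
  have hpartial : Tendsto (fun m => (1 - Q) * ∑ t ∈ range m, Q ^ t) atTop (𝓝 1) := by
    simpa [mul_neg_geom_sum] using tendsto_const_nhds.sub hlim
  have hdet : IsUnit (1 - Q).det := by
    refine isUnit_iff_ne_zero.mpr fun h0 => zero_ne_one (α := ℝ) ?_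
    have := (continuous_id.matrix_det.tendsto _).comp hpartial
    simp only [Function.comp_def, id, det_mul, h0, zero_mul, det_one] at this
    exact tendsto_nhds_unique tendsto_const_nhds this
  have hinv : Tendsto (fun m => ∑ t ∈ range m, Q ^ t) atTop (𝓝 (1 - Q)⁻¹) := by
    simpa [← mul_assoc, nonsing_inv_mul _ hdet] using
      (tendsto_const_nhds (x := (1 - Q)⁻¹)).mul hpartial
  refine ⟨hdet, fun i j => ge_of_tendsto (((continuous_id.matrix_elem i j).tendsto _).comp hinv)
    (Eventually.of_forall fun m => ?_)⟩
  simp only [Function.comp_apply, id, sum_apply]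
  exact sum_nonneg fun t _ => pow_apply_nonneg hQ t i j

attribute [local instance] Matrix.linftyOpNormedRing Matrix.linftyOpNormedAlgebra in
theorem isUnit_det_and_inv_nonneg_of_spectrum_re_pos [Nonempty n] {B : Matrix n n ℝ}
    (hoff : ∀ i j, i ≠ j → B i j ≤ 0)
    (hspec : ∀ μ ∈ spectrum ℂ (B.map Complex.ofReal), 0 < μ.re) :
    IsUnit B.det ∧ ∀ i j, 0 ≤ B⁻¹ i j := by
  have hdiag : ∀ᶠ h : ℝ in 𝓝[>] 0, ∀ i, h * B i i ≤ 1 := eventually_all.mpr fun i =>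
    (((continuous_mul_const (B i i)).tendsto' 0 0 (zero_mul _)).mono_left
      nhdsWithin_le_nhds).eventually (eventually_le_nhds zero_lt_one)
  obtain ⟨h, ⟨hρ, hdiag⟩, hh⟩ :=
    ((spectrum.eventually_spectralRadius_one_sub_smul_lt_one hspec).and hdiag |>.and
      self_mem_nhdsWithin).exists
  set Q := 1 - h • B with hQ
  have hQnonneg : ∀ i j, 0 ≤ Q i j := by
    intro i j
    rcases eq_or_ne i j with rfl | hij
    · simpa [hQ] using hdiag i
    · simpa [hQ, one_apply_ne hij] using mul_nonpos_of_nonneg_of_nonpos hh.le (hoff i j hij)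
  have hQmap : Q.map Complex.ofReal = 1 - (h : ℂ) • B.map Complex.ofReal := by
    ext i j
    by_cases hij : i = j <;> simp [hQ, hij]
  obtain ⟨hdet, hinv⟩ := isUnit_det_one_sub_and_inv_nonneg_of_tendsto_pow hQnonneg
    (tendsto_pow_atTop_nhds_zero_of_spectralRadius_lt_one (hQmap ▸ hρ))
  rw [hQ, sub_sub_cancel] at hdet hinv
  have hdetB : IsUnit B.det := by
    rw [det_smul, IsUnit.mul_iff] at hdet
    exact hdet.2
  have hinvB : (h • B)⁻¹ = h⁻¹ • B⁻¹ := by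
    simpa [Units.smul_def] using inv_smul' B (Units.mk0 h hh.ne') hdetB
  refine ⟨hdetB, fun i j => ?_⟩
  have := hinv i j
  rw [hinvB, smul_apply, smul_eq_mul] at this
  exact (mul_nonneg_iff_of_pos_left (inv_pos.mpr hh)).mp this

end Matrix

section Chain

variable {r y : ℕ → ℝ}

theorem prod_Ico_mul_le_of_step (hr : ∀ l, 0 ≤ r l) (hstep : ∀ l, 1 + r l * y l ≤ y (l + 1))
    {a b : ℕ} (hab : a ≤ b) : (∏ l ∈ Ico a b, r l) * y a ≤ y b := by
  induction b, hab using Nat.le_induction with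
  | base => simp
  | succ b hab ih =>
    rw [prod_Ico_succ_top hab, mul_right_comm]
    nlinarith [hstep b, mul_le_mul_of_nonneg_left ih (hr b)]

theorem one_add_prod_Ico_mul_le_of_step (hr : ∀ l, 0 ≤ r l)
    (hstep : ∀ l, 1 + r l * y l ≤ y (l + 1)) {a b : ℕ} (hab : a < b) :
    1 + (∏ l ∈ Ico a b, r l) * y a ≤ y b := by
  obtain ⟨b, rfl⟩ := Nat.exists_eq_add_one_of_ne_zero (Nat.ne_zero_of_lt hab)
  rw [prod_Ico_succ_top (Nat.le_of_lt_succ hab), mul_right_comm]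
  nlinarith [hstep b, mul_le_mul_of_nonneg_left
    (prod_Ico_mul_le_of_step hr hstep (Nat.le_of_lt_succ hab)) (hr b)]

theorem one_add_prod_range_mul_le_of_step_of_cycle (hr : ∀ l, 0 ≤ r l)
    (hstep : ∀ l, 1 + r l * y l ≤ y (l + 1)) {k : ℕ} (hk : 1 ≤ k) (hclosed : y 0 = y k)
    (l₀ : ℕ) (hl₀ : l₀ ≤ k) : 1 + (∏ l ∈ range k, r l) * y l₀ ≤ y l₀ := by
  rcases Nat.eq_zero_or_pos l₀ with rfl | hpos
  · have := one_add_prod_Ico_mul_le_of_step hr hstep hk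
    rwa [← range_eq_Ico, ← hclosed] at this
  · have hfirst := one_add_prod_Ico_mul_le_of_step hr hstep hpos
    have hsecond := prod_Ico_mul_le_of_step hr hstep hl₀
    have hprod : 0 ≤ ∏ l ∈ Ico 0 l₀, r l := prod_nonneg fun l _ => hr l
    rw [range_eq_Ico, ← prod_Ico_consecutive _ (Nat.zero_le l₀) hl₀, mul_assoc]
    nlinarith [mul_le_mul_of_nonneg_left hsecond hprod]

end Chain

theorem lt_one_and_one_div_sub_le_of_one_add_mul_le {w y : ℝ} (hy : 0 ≤ y)
    (h : 1 + w * y ≤ y) : w < 1 ∧ 1 / (1 - w) ≤ y := by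
  have hw : w < 1 := by nlinarith
  exact ⟨hw, (div_le_iff₀ (sub_pos.mpr hw)).mpr (by linarith)⟩

theorem stmt_9_general {N : ℕ} (A M : Matrix (Fin N) (Fin N) ℝ)
    (hAdiag : ∀ i j, i ≠ j → A i j = 0) (hApos : ∀ i, 0 < A i i)
    (hMnonneg : ∀ i j, 0 ≤ M i j)
    (hHur : IsHurwitz (-(A - M)))
    (γ : ℝ)
    (hu : ∀ i, ((A - M)⁻¹ *ᵥ (fun _ : Fin N => (1 : ℝ))) i ≤ γ)
    (k : ℕ) (hk : 1 ≤ k) (c : ℕ → Fin N)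
    (hclosed : c 0 = c k) :
    (∏ l ∈ Finset.range k, M (c (l + 1)) (c l) / A (c l) (c l)) < 1 ∧
    ∀ p : Fin N, (∃ l ≤ k, c l = p) →
      1 / (1 - ∏ l ∈ Finset.range k, M (c (l + 1)) (c l) / A (c l) (c l)) ≤ A p p * γ := by
  have : Nonempty (Fin N) := ⟨c 0⟩
  obtain ⟨hdet, hinv⟩ := isUnit_det_and_inv_nonneg_of_spectrum_re_pos
    (fun i j hij => by simpa [hAdiag i j hij] using hMnonneg i j) (isHurwitz_neg_iff.mp hHur)
  set u := (A - M)⁻¹ *ᵥ (fun _ : Fin N => (1 : ℝ))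
  have hu0 : ∀ i, 0 ≤ u i := fun i => by
    simpa [u, mulVec, dotProduct] using sum_nonneg fun j _ => hinv i j
  have hAMu : (A - M) *ᵥ u = 1 := by
    rw [mulVec_mulVec, mul_nonsing_inv _ hdet, one_mulVec]; rfl
  have hcycle := one_add_prod_range_mul_le_of_step_of_cycle
    (r := fun l => M (c (l + 1)) (c l) / A (c l) (c l)) (y := fun l => A (c l) (c l) * u (c l))
    (fun l => div_nonneg (hMnonneg _ _) (hApos _).le)
    (fun l => by
      rw [← mul_assoc, div_mul_cancel₀ _ (hApos _).ne']
      exact one_add_mul_le_of_sub_mulVec_eq_one hAdiag hMnonneg hu0 hAMu _ _)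
    hk (by simp only [hclosed])
  have hx0 (p : Fin N) : 0 ≤ A p p * u p := mul_nonneg (hApos p).le (hu0 p)
  refine ⟨(lt_one_and_one_div_sub_le_of_one_add_mul_le (hx0 _) (hcycle 0 (Nat.zero_le k))).1, ?_⟩
  rintro p ⟨l₀, hl₀, rfl⟩
  exact (lt_one_and_one_div_sub_le_of_one_add_mul_le (hx0 _) (hcycle l₀ hl₀)).2.trans
    (mul_le_mul_of_nonneg_left (hu _) (hApos _).le)

/-- Suppose `-(A-M)` is Hurwitz and `u = (A-M)⁻¹ 𝟙 ≤ γ 𝟙` with `γ > 0`.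
For every cycle `c(0), …, c(k) = c(0)` (with `M_{c(l+1), c(l)} > 0` for `l < k`) of weight
`w = ∏_{l<k} M_{c(l+1), c(l)} / a_{c(l)}`, one has `w < 1` and `1/(1-w) ≤ a_p γ` for every
node `p` on the cycle. -/
theorem stmt_9 {N : ℕ} (A M : Matrix (Fin N) (Fin N) ℝ)
    (hAdiag : ∀ i j, i ≠ j → A i j = 0) (hApos : ∀ i, 0 < A i i)
    (hMnonneg : ∀ i j, 0 ≤ M i j) (hMdiag : ∀ i, M i i = 0)
    (hHur : IsHurwitz (-(A - M)))
    (γ : ℝ) (hγ : 0 < γ)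
    (hu : ∀ i, ((A - M)⁻¹ *ᵥ (fun _ : Fin N => (1 : ℝ))) i ≤ γ)
    (k : ℕ) (hk : 1 ≤ k) (c : ℕ → Fin N)
    (hclosed : c 0 = c k)
    (hedges : ∀ l < k, 0 < M (c (l + 1)) (c l)) :
    (∏ l ∈ Finset.range k, M (c (l + 1)) (c l) / A (c l) (c l)) < 1 ∧
    ∀ p : Fin N, (∃ l ≤ k, c l = p) →
      1 / (1 - ∏ l ∈ Finset.range k, M (c (l + 1)) (c l) / A (c l) (c l)) ≤ A p p * γ :=
  stmt_9_general A M hAdiag hApos hMnonneg hHur γ hu k hk c hclosed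
end
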